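/- arXiv:2208.08744 — 3 statements merged into one kernel-verified Lean document; each statement's English description precedes it below -/
import Mathlib

section
/- Let A ∈ R^{d×d}, B ∈ R^{d×k}, and let Q ∈ R^{d×d}, R ∈ R^{k×k} be symmetric positive definite. Let K, K' ∈ R^{k×d} both stabilize (A,B) (i.e., ρ(A−BK) < 1 and ρ(A−BK') < 1), and let P_K, P_{K'} be the unique positive definite solutions of P = Q + KᵀRK + (A−BK)ᵀP(A−BK) (resp. with K'). Define E_K = (R + BᵀP_K B)K − BᵀP_K A. Then for every x ∈ R^d, xᵀ(P_{K'} − P_K)x = ∑_{t≥0} [ 2 x_tᵀ (K'−K)ᵀ E_K x_t + x_tᵀ (K'−K)ᵀ (R + BᵀP_K B)(K'−K) x_t ], where x_t = (A−BK')ᵗ x. -/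
/-!
Write `L = A − BK'`, `C = K' − K` and `D = P_{K'} − P_K`. Subtracting the two Lyapunov equations
gives a Lyapunov equation for `D`,
`D − LᵀDL = CᵀE_K + (CᵀE_K)ᵀ + Cᵀ(R + BᵀP_K B)C`,
whose right-hand side has the quadratic form of the summand. So the summand at `t` is
`q(x_t) − q(x_{t+1})` with `q(v) = vᵀDv`, and the series telescopes to `q(x)`. Since `ρ(L) < 1`,
Gelfand's formula gives `‖Lᵗ‖ ≤ cᵗ` eventually for some `c < 1`; hence the summands are
`O(c²ᵗ)`, which makes the series summable and `q(x_t) → 0`.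
-/

open Matrix Filter Asymptotics Topology

theorem spectrum.exists_isBigO_pow_of_spectralRadius_lt_one {A : Type*} [NormedRing A]
    [NormedAlgebra ℂ A] [CompleteSpace A] (a : A) (ha : spectralRadius ℂ a < 1) :
    ∃ c : ℝ, 0 ≤ c ∧ c < 1 ∧ (fun n : ℕ => a ^ n) =O[atTop] (fun n => c ^ n) := by
  obtain ⟨c, hρc, hc1⟩ := exists_between ha
  lift c to NNReal using (hc1.trans ENNReal.one_lt_top).ne
  refine ⟨c, c.coe_nonneg, mod_cast hc1, IsBigO.of_bound 1 ?_⟩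
  filter_upwards [(pow_nnnorm_pow_one_div_tendsto_nhds_spectralRadius a).eventually_lt_const hρc,
    eventually_ge_atTop 1] with n hn hn1
  have hn0 : (n : ℝ) ≠ 0 := by positivity
  have : (‖a ^ n‖₊ : ENNReal) ≤ (c : ENNReal) ^ n := by
    simpa [← ENNReal.rpow_mul, hn0, ← ENNReal.rpow_natCast] using
      ENNReal.rpow_le_rpow hn.le (by positivity : (0 : ℝ) ≤ n)
  simpa [abs_of_nonneg c.coe_nonneg] using
    NNReal.coe_le_coe.mpr (mod_cast this : ‖a ^ n‖₊ ≤ c ^ n)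

section LinftyOpNorm

attribute [local instance] Matrix.linftyOpNormedAddCommGroup Matrix.linftyOpNormedRing
  Matrix.linftyOpNormedAlgebra

theorem Asymptotics.IsBigO.const_mulVec {α m n R : Type*} [Fintype m] [Fintype n] [NormedRing R]
    {l : Filter α} {v : α → n → R} {f : α → ℝ} (M : Matrix m n R) (hv : v =O[l] f) :
    (fun a => M *ᵥ v a) =O[l] f :=
  (isBigO_of_le' l fun a => linfty_opNorm_mulVec M (v a)).trans hv

theorem Matrix.linfty_opNorm_map_ofReal {m n : Type*} [Fintype m] [Fintype n] (M : Matrix m n ℝ) :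
    ‖M.map Complex.ofReal‖ = ‖M‖ := by
  simp [linfty_opNorm_def]

theorem Matrix.exists_isBigO_pow_mulVec_of_spectrum_lt_one {n : Type*} [Fintype n] [DecidableEq n]
    (L : Matrix n n ℝ) (hL : ∀ μ ∈ spectrum ℂ (L.map Complex.ofReal), ‖μ‖ < 1) :
    ∃ c : ℝ, 0 ≤ c ∧ c < 1 ∧
      ∀ x : n → ℝ, (fun t : ℕ => (L ^ t) *ᵥ x) =O[atTop] (fun t => c ^ t) := by
  -- For empty `n` the complex matrix algebra is trivial and its spectrum is empty.
  cases isEmpty_or_nonempty n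
  · exact ⟨0, le_rfl, zero_lt_one, fun x => by simp [Subsingleton.elim _ (0 : n → ℝ)]⟩
  have : CompleteSpace (Matrix n n ℂ) := FiniteDimensional.complete ℝ _
  have hρ : spectralRadius ℂ (L.map Complex.ofReal) < 1 := by
    simpa using spectrum.spectralRadius_lt_of_forall_lt _ (r := 1)
      fun μ hμ => by simpa [← NNReal.coe_lt_coe] using hL μ hμ
  obtain ⟨c, hc0, hc1, hpow⟩ := spectrum.exists_isBigO_pow_of_spectralRadius_lt_one _ hρ
  refine ⟨c, hc0, hc1, fun x => ?_⟩
  have hpowL : (fun t : ℕ => L ^ t) =O[atTop] (fun t => c ^ t) := by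
    refine IsBigO.trans (isBigO_of_le _ fun t => ?_) hpow
    rw [← linfty_opNorm_map_ofReal (L ^ t)]
    exact (congrArg norm (map_pow Complex.ofRealHom.mapMatrix L t)).le
  exact (isBigO_of_le' (c := ‖x‖) _ fun t =>
    (linfty_opNorm_mulVec _ _).trans_eq (mul_comm _ _)).trans hpowL

end LinftyOpNorm

theorem Asymptotics.IsBigO.dotProduct {α ι R : Type*} [Fintype ι] [NormedCommRing R]
    {l : Filter α} {u w : α → ι → R} {f g : α → ℝ} (hu : u =O[l] f) (hw : w =O[l] g) :
    (fun a => u a ⬝ᵥ w a) =O[l] (fun a => f a * g a) := by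
  change (fun a => ∑ i, u a i * w a i) =O[l] _
  refine IsBigO.fun_sum fun i _ => IsBigO.mul ?_ ?_
  · exact (isBigO_of_le l fun a => norm_le_pi_norm (u a) i).trans hu
  · exact (isBigO_of_le l fun a => norm_le_pi_norm (w a) i).trans hw

theorem hasSum_sub_succ_of_tendsto_zero {G : Type*} [AddCommGroup G] [TopologicalSpace G]
    [IsTopologicalAddGroup G] [T2Space G] {g : ℕ → G}
    (hs : Summable fun n => g n - g (n + 1)) (hg : Tendsto g atTop (𝓝 0)) :
    HasSum (fun n => g n - g (n + 1)) (g 0) := by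
  rw [hs.hasSum_iff_tendsto_nat]
  simp_rw [Finset.sum_range_sub']
  simpa using tendsto_const_nhds.sub hg

theorem Matrix.mulVec_dotProduct_mulVec_mulVec {n R : Type*} [Fintype n] [CommSemiring R]
    (L D : Matrix n n R) (v : n → R) :
    L *ᵥ v ⬝ᵥ D *ᵥ (L *ᵥ v) = v ⬝ᵥ (Lᵀ * D * L) *ᵥ v := by
  rw [Matrix.mul_assoc, ← mulVec_mulVec, dotProduct_transpose_mulVec, mulVec_mulVec,
    dotProduct_comm]

theorem Matrix.hasSum_dotProduct_mulVec_pow_of_lyapunov {n : Type*} [Fintype n] [DecidableEq n]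
    {L D M : Matrix n n ℝ} (hLyap : D - Lᵀ * D * L = M) {c : ℝ} (hc0 : 0 ≤ c) (hc1 : c < 1)
    {x : n → ℝ} (hdecay : (fun t : ℕ => (L ^ t) *ᵥ x) =O[atTop] (fun t => c ^ t)) :
    HasSum (fun t : ℕ => (L ^ t) *ᵥ x ⬝ᵥ M *ᵥ ((L ^ t) *ᵥ x)) (x ⬝ᵥ D *ᵥ x) := by
  have hquad : ∀ N : Matrix n n ℝ,
      (fun t : ℕ => (L ^ t) *ᵥ x ⬝ᵥ N *ᵥ ((L ^ t) *ᵥ x)) =O[atTop] (fun t => (c * c) ^ t) := by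
    intro N
    simpa only [mul_pow] using hdecay.dotProduct (hdecay.const_mulVec N)
  have htel : ∀ t : ℕ, (L ^ t) *ᵥ x ⬝ᵥ M *ᵥ ((L ^ t) *ᵥ x) =
      (L ^ t) *ᵥ x ⬝ᵥ D *ᵥ ((L ^ t) *ᵥ x) - (L ^ (t + 1)) *ᵥ x ⬝ᵥ D *ᵥ ((L ^ (t + 1)) *ᵥ x) := by
    intro t
    rw [pow_succ', ← mulVec_mulVec, mulVec_dotProduct_mulVec_mulVec L D, ← dotProduct_sub,
      ← sub_mulVec, hLyap]
  have hcc : c * c < 1 := by nlinarith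
  have hsum :=
    summable_of_isBigO_nat (summable_geometric_of_lt_one (by positivity) hcc) (hquad M)
  simp_rw [htel] at hsum ⊢
  simpa using hasSum_sub_succ_of_tendsto_zero hsum
    ((hquad D).trans_tendsto (tendsto_pow_atTop_nhds_zero_of_lt_one (by positivity) hcc))

theorem Matrix.dotProduct_add_transpose_mulVec {n R : Type*} [Fintype n] [CommSemiring R]
    (N : Matrix n n R) (v : n → R) : v ⬝ᵥ (N + Nᵀ) *ᵥ v = 2 * (v ⬝ᵥ N *ᵥ v) := by
  rw [add_mulVec, dotProduct_add, dotProduct_transpose_mulVec, two_mul]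

theorem lqr_value_sub_lyapunov_eq {m n 𝕜 : Type*} [Fintype m] [Fintype n] [CommRing 𝕜]
    {A Q P P' : Matrix n n 𝕜} {B : Matrix n m 𝕜} {R : Matrix m m 𝕜} {K K' E : Matrix m n 𝕜}
    (hP : P.IsSymm) (hR : R.IsSymm)
    (hPeq : P = Q + Kᵀ * R * K + (A - B * K)ᵀ * P * (A - B * K))
    (hP'eq : P' = Q + K'ᵀ * R * K' + (A - B * K')ᵀ * P' * (A - B * K'))
    (hE : E = (R + Bᵀ * P * B) * K - Bᵀ * P * A) :
    (P' - P) - (A - B * K')ᵀ * (P' - P) * (A - B * K') =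
      (K' - K)ᵀ * E + ((K' - K)ᵀ * E)ᵀ + (K' - K)ᵀ * (R + Bᵀ * P * B) * (K' - K) := by
  have hP'L : P' - (A - B * K')ᵀ * P' * (A - B * K') = Q + K'ᵀ * R * K' := by
    nth_rewrite 1 [hP'eq]; abel
  have hPL : P - (A - B * K)ᵀ * P * (A - B * K) = Q + Kᵀ * R * K := by
    nth_rewrite 1 [hPeq]; abel
  calc (P' - P) - (A - B * K')ᵀ * (P' - P) * (A - B * K')
      = (P' - (A - B * K')ᵀ * P' * (A - B * K')) - (P - (A - B * K)ᵀ * P * (A - B * K))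
          + ((A - B * K')ᵀ * P * (A - B * K') - (A - B * K)ᵀ * P * (A - B * K)) := by
        noncomm_ring
    _ = _ := by
        rw [hP'L, hPL, hE]
        simp only [transpose_neg, transpose_mul, transpose_add, transpose_transpose, hP.eq, hR.eq,
          sub_eq_add_neg, Matrix.mul_add, Matrix.add_mul, Matrix.neg_mul, Matrix.mul_neg,
          Matrix.mul_assoc]
        abel

theorem stmt_9_general (d k : ℕ) (A : Matrix (Fin d) (Fin d) ℝ) (B : Matrix (Fin d) (Fin k) ℝ)
    (Q : Matrix (Fin d) (Fin d) ℝ) (R : Matrix (Fin k) (Fin k) ℝ)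
    (hR : R.PosDef)
    (K K' : Matrix (Fin k) (Fin d) ℝ)
    (hK' : ∀ μ ∈ spectrum ℂ ((A - B * K').map Complex.ofReal), ‖μ‖ < 1)
    (P P' : Matrix (Fin d) (Fin d) ℝ) (hP : P.PosDef)
    (hPeq : P = Q + Kᵀ * R * K + (A - B * K)ᵀ * P * (A - B * K))
    (hP'eq : P' = Q + K'ᵀ * R * K' + (A - B * K')ᵀ * P' * (A - B * K'))
    (E : Matrix (Fin k) (Fin d) ℝ) (hE : E = (R + Bᵀ * P * B) * K - Bᵀ * P * A)
    (x : Fin d → ℝ) :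
    HasSum
      (fun t : ℕ =>
        2 * (((A - B * K') ^ t).mulVec x ⬝ᵥ ((K' - K)ᵀ * E).mulVec
              (((A - B * K') ^ t).mulVec x)) +
        ((A - B * K') ^ t).mulVec x ⬝ᵥ
          ((K' - K)ᵀ * (R + Bᵀ * P * B) * (K' - K)).mulVec
            (((A - B * K') ^ t).mulVec x))
      (x ⬝ᵥ (P' - P).mulVec x) := by
  obtain ⟨c, hc0, hc1, hdecay⟩ := (A - B * K').exists_isBigO_pow_mulVec_of_spectrum_lt_one hK'
  have hLyap := lqr_value_sub_lyapunov_eq (isHermitian_iff_isSymm.mp hP.1)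
    (isHermitian_iff_isSymm.mp hR.1) hPeq hP'eq hE
  convert hasSum_dotProduct_mulVec_pow_of_lyapunov hLyap hc0 hc1 (hdecay x) using 2 with t
  rw [add_mulVec, dotProduct_add, dotProduct_add_transpose_mulVec]

/-- LQR almost-smoothness identity: for stabilizing `K, K'` with value matrices
`P_K, P_{K'}` solving the policy Lyapunov equations, and
`E_K = (R + BᵀP_K B)K − BᵀP_K A`, for every `x` the series
`∑_t [2 x_tᵀ(K'−K)ᵀE_K x_t + x_tᵀ(K'−K)ᵀ(R+BᵀP_K B)(K'−K)x_t]`, with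
`x_t = (A−BK')ᵗ x`, converges to `xᵀ(P_{K'} − P_K)x`. -/
theorem stmt_9 (d k : ℕ) (A : Matrix (Fin d) (Fin d) ℝ) (B : Matrix (Fin d) (Fin k) ℝ)
    (Q : Matrix (Fin d) (Fin d) ℝ) (R : Matrix (Fin k) (Fin k) ℝ)
    (hQ : Q.PosDef) (hR : R.PosDef)
    (K K' : Matrix (Fin k) (Fin d) ℝ)
    (hK : ∀ μ ∈ spectrum ℂ ((A - B * K).map Complex.ofReal), ‖μ‖ < 1)
    (hK' : ∀ μ ∈ spectrum ℂ ((A - B * K').map Complex.ofReal), ‖μ‖ < 1)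
    (P P' : Matrix (Fin d) (Fin d) ℝ) (hP : P.PosDef) (hP' : P'.PosDef)
    (hPeq : P = Q + Kᵀ * R * K + (A - B * K)ᵀ * P * (A - B * K))
    (hP'eq : P' = Q + K'ᵀ * R * K' + (A - B * K')ᵀ * P' * (A - B * K'))
    (E : Matrix (Fin k) (Fin d) ℝ) (hE : E = (R + Bᵀ * P * B) * K - Bᵀ * P * A)
    (x : Fin d → ℝ) :
    HasSum
      (fun t : ℕ =>
        2 * (((A - B * K') ^ t).mulVec x ⬝ᵥ ((K' - K)ᵀ * E).mulVec
              (((A - B * K') ^ t).mulVec x)) +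
        ((A - B * K') ^ t).mulVec x ⬝ᵥ
          ((K' - K)ᵀ * (R + Bᵀ * P * B) * (K' - K)).mulVec
            (((A - B * K') ^ t).mulVec x))
      (x ⬝ᵥ (P' - P).mulVec x) :=
  stmt_9_general d k A B Q R hR K K' hK' P P' hP hPeq hP'eq E hE x
end

section
/- With the notation of LQR (A, B, Q, R, stabilizing K, value matrix P_K, E_K = (R+BᵀP_K B)K − BᵀP_K A) and for any x ∈ R^d and K' ∈ R^{k×d}, the quantity A_{K,K'}(x) := 2 xᵀ(K'−K)ᵀE_K x + xᵀ(K'−K)ᵀ(R + BᵀP_K B)(K'−K)x satisfies A_{K,K'}(x) ≥ − xᵀ E_Kᵀ (R + BᵀP_K B)^{-1} E_K x, with equality when K' = K − (R + BᵀP_K B)^{-1} E_K. -/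
open Matrix

/-!
Since `M = R + BᵀPB` is positive definite, it is invertible and
`2 vᵀw + vᵀMv + wᵀM⁻¹w = (v + M⁻¹w)ᵀ M (v + M⁻¹w) ≥ 0`, with equality at `v = -M⁻¹w`.
Taking `v = (K' - K)x` and `w = Ex` gives both claims.
-/

section CompleteSquare

variable {ι 𝕜 : Type*} [Fintype ι] [DecidableEq ι] [CommRing 𝕜]

theorem Matrix.IsSymm.dotProduct_mulVec_add_inv_mulVec {M : Matrix ι ι 𝕜} (hM : M.IsSymm)
    (hdet : IsUnit M.det) (v w : ι → 𝕜) :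
    (v + M⁻¹ *ᵥ w) ⬝ᵥ M *ᵥ (v + M⁻¹ *ᵥ w) = 2 * (v ⬝ᵥ w) + v ⬝ᵥ M *ᵥ v + w ⬝ᵥ M⁻¹ *ᵥ w := by
  have hMinv : M *ᵥ (M⁻¹ *ᵥ w) = w := by
    rw [mulVec_mulVec, mul_nonsing_inv M hdet, one_mulVec]
  have hcross : (M⁻¹ *ᵥ w) ⬝ᵥ M *ᵥ v = v ⬝ᵥ w := by
    rw [dotProduct_mulVec, ← mulVec_transpose, hM.eq, hMinv, dotProduct_comm]
  rw [mulVec_add, hMinv, dotProduct_add, add_dotProduct, add_dotProduct, hcross,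
    dotProduct_comm (M⁻¹ *ᵥ w) w]
  ring

variable {M : Matrix ι ι ℝ}

theorem Matrix.PosDef.neg_dotProduct_inv_mulVec_le (hM : M.PosDef) (v w : ι → ℝ) :
    -(w ⬝ᵥ M⁻¹ *ᵥ w) ≤ 2 * (v ⬝ᵥ w) + v ⬝ᵥ M *ᵥ v := by
  have hsq := (isHermitian_iff_isSymm.mp hM.isHermitian).dotProduct_mulVec_add_inv_mulVec
    hM.det_pos.ne'.isUnit v w
  have hnonneg := hM.posSemidef.dotProduct_mulVec_nonneg (v + M⁻¹ *ᵥ w)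
  rw [star_trivial] at hnonneg
  linarith

theorem Matrix.PosDef.neg_dotProduct_inv_mulVec_eq (hM : M.PosDef) (w : ι → ℝ) :
    2 * (-(M⁻¹ *ᵥ w) ⬝ᵥ w) + -(M⁻¹ *ᵥ w) ⬝ᵥ M *ᵥ -(M⁻¹ *ᵥ w) = -(w ⬝ᵥ M⁻¹ *ᵥ w) := by
  have hsq := (isHermitian_iff_isSymm.mp hM.isHermitian).dotProduct_mulVec_add_inv_mulVec
    hM.det_pos.ne'.isUnit (-(M⁻¹ *ᵥ w)) w
  rw [neg_add_cancel, zero_dotProduct] at hsq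
  linarith

end CompleteSquare

theorem Matrix.dotProduct_transpose_mul_mulVec {m n n' α : Type*} [Fintype m] [Fintype n]
    [Fintype n'] [CommSemiring α] (C : Matrix m n α) (D : Matrix m n' α) (x : n → α)
    (y : n' → α) : x ⬝ᵥ (Cᵀ * D) *ᵥ y = (C *ᵥ x) ⬝ᵥ D *ᵥ y := by
  rw [← mulVec_mulVec, dotProduct_mulVec, ← mulVec_transpose, transpose_transpose]

theorem Matrix.PosDef.add_transpose_mul_mul_self {m n : Type*} [Fintype m] [Fintype n]
    {R : Matrix n n ℝ} {P : Matrix m m ℝ} (hR : R.PosDef) (hP : P.PosSemidef)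
    (B : Matrix m n ℝ) : (R + Bᵀ * P * B).PosDef :=
  hR.add_posSemidef (by simpa using hP.conjTranspose_mul_mul_same B)

theorem stmt_10_general (d k : ℕ) (B : Matrix (Fin d) (Fin k) ℝ)
    (R : Matrix (Fin k) (Fin k) ℝ) (hR : R.PosDef)
    (K : Matrix (Fin k) (Fin d) ℝ)
    (P : Matrix (Fin d) (Fin d) ℝ) (hP : P.PosDef)
    (E : Matrix (Fin k) (Fin d) ℝ) (x : Fin d → ℝ) :
    (∀ K' : Matrix (Fin k) (Fin d) ℝ,
      2 * (x ⬝ᵥ ((K' - K)ᵀ * E).mulVec x) +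
          x ⬝ᵥ ((K' - K)ᵀ * (R + Bᵀ * P * B) * (K' - K)).mulVec x
        ≥ -(x ⬝ᵥ (Eᵀ * (R + Bᵀ * P * B)⁻¹ * E).mulVec x)) ∧
    (2 * (x ⬝ᵥ (((K - (R + Bᵀ * P * B)⁻¹ * E) - K)ᵀ * E).mulVec x) +
        x ⬝ᵥ (((K - (R + Bᵀ * P * B)⁻¹ * E) - K)ᵀ * (R + Bᵀ * P * B) *
          ((K - (R + Bᵀ * P * B)⁻¹ * E) - K)).mulVec x
      = -(x ⬝ᵥ (Eᵀ * (R + Bᵀ * P * B)⁻¹ * E).mulVec x)) := by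
  set M := R + Bᵀ * P * B
  have hM : M.PosDef := hR.add_transpose_mul_mul_self hP.posSemidef B
  simp only [Matrix.mul_assoc, dotProduct_transpose_mul_mulVec]
  simp only [← mulVec_mulVec]
  refine ⟨fun K' ↦ hM.neg_dotProduct_inv_mulVec_le _ _, ?_⟩
  have hstep : (K - M⁻¹ * E - K) *ᵥ x = -(M⁻¹ *ᵥ (E *ᵥ x)) := by
    rw [sub_sub_cancel_left, neg_mulVec, mulVec_mulVec]
  rw [hstep]
  exact hM.neg_dotProduct_inv_mulVec_eq _

/-- Completing the square: with `P_K` the value matrix of a stabilizing `K` and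
`E_K = (R+BᵀP_K B)K − BᵀP_K A`, the quantity
`A_{K,K'}(x) = 2xᵀ(K'−K)ᵀE_K x + xᵀ(K'−K)ᵀ(R+BᵀP_K B)(K'−K)x` satisfies
`A_{K,K'}(x) ≥ −xᵀE_Kᵀ(R+BᵀP_K B)⁻¹E_K x`, with equality when
`K' = K − (R+BᵀP_K B)⁻¹E_K`. -/
theorem stmt_10 (d k : ℕ) (A : Matrix (Fin d) (Fin d) ℝ) (B : Matrix (Fin d) (Fin k) ℝ)
    (Q : Matrix (Fin d) (Fin d) ℝ) (R : Matrix (Fin k) (Fin k) ℝ)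
    (hQ : Q.PosDef) (hR : R.PosDef)
    (K : Matrix (Fin k) (Fin d) ℝ)
    (hK : ∀ μ ∈ spectrum ℂ ((A - B * K).map Complex.ofReal), ‖μ‖ < 1)
    (P : Matrix (Fin d) (Fin d) ℝ) (hP : P.PosDef)
    (hPeq : P = Q + Kᵀ * R * K + (A - B * K)ᵀ * P * (A - B * K))
    (E : Matrix (Fin k) (Fin d) ℝ) (hE : E = (R + Bᵀ * P * B) * K - Bᵀ * P * A)
    (x : Fin d → ℝ) :
    (∀ K' : Matrix (Fin k) (Fin d) ℝ,
      2 * (x ⬝ᵥ ((K' - K)ᵀ * E).mulVec x) +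
          x ⬝ᵥ ((K' - K)ᵀ * (R + Bᵀ * P * B) * (K' - K)).mulVec x
        ≥ -(x ⬝ᵥ (Eᵀ * (R + Bᵀ * P * B)⁻¹ * E).mulVec x)) ∧
    (2 * (x ⬝ᵥ (((K - (R + Bᵀ * P * B)⁻¹ * E) - K)ᵀ * E).mulVec x) +
        x ⬝ᵥ (((K - (R + Bᵀ * P * B)⁻¹ * E) - K)ᵀ * (R + Bᵀ * P * B) *
          ((K - (R + Bᵀ * P * B)⁻¹ * E) - K)).mulVec x
      = -(x ⬝ᵥ (Eᵀ * (R + Bᵀ * P * B)⁻¹ * E).mulVec x)) :=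
  stmt_10_general d k B R hR K P hP E x
end

section
/- Let D_K ∈ R^{d×d} be symmetric positive definite with σ_min(D_K) ≥ μ > 0, let K ∈ R^{k×d} with ‖K‖ ≤ K̄, and σ > 0. Then the joint covariance D̃ = [[D_K, −D_K Kᵀ], [−K D_K, K D_K Kᵀ + σ² I_k]] satisfies σ_min(D̃) ≥ min{ μ/2, σ²/(8K̄²), σ²/2 }. -/
/-!
With `L = [[I, -Kᵀ], [0, I]]` the covariance is `D̃ = Lᵀ diag(D_K, σ² I) L`, so for `w = (a, b)`
`wᵀ D̃ w = (a - Kᵀ b)ᵀ D_K (a - Kᵀ b) + σ² ‖b‖² ≥ μ ‖a - Kᵀ b‖² + σ² ‖b‖²`.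
Since `‖Kᵀ‖ = ‖K‖ ≤ K̄`, `‖a - Kᵀ b‖² ≥ ½ ‖a‖² - K̄² ‖b‖²`, and a constant `c` with `2c ≤ μ` and
`c (2 K̄² + 1) ≤ σ²` then satisfies `wᵀ D̃ w ≥ c (‖a‖² + ‖b‖²)`.
-/

open Matrix

namespace Matrix

variable {m n R : Type*} [Fintype m] [Fintype n]

theorem sumElim_dotProduct_fromBlocks_mulVec_sumElim [CommRing R] (A : Matrix m m R)
    (K : Matrix n m R) (S : Matrix n n R) (a : m → R) (b : n → R) :
    Sum.elim a b ⬝ᵥ fromBlocks A (-(A * Kᵀ)) (-(K * A)) (K * A * Kᵀ + S) *ᵥ Sum.elim a b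
      = (a - Kᵀ *ᵥ b) ⬝ᵥ A *ᵥ (a - Kᵀ *ᵥ b) + b ⬝ᵥ S *ᵥ b := by
  have hK : ∀ x, b ⬝ᵥ K *ᵥ x = Kᵀ *ᵥ b ⬝ᵥ x := fun x => by
    rw [mulVec_transpose, dotProduct_mulVec]
  simp only [fromBlocks_mulVec, Sum.elim_comp_inl, Sum.elim_comp_inr, sumElim_dotProduct_sumElim,
    sub_dotProduct, dotProduct_sub, mulVec_sub, add_mulVec, neg_mulVec, dotProduct_add,
    dotProduct_neg, ← mulVec_mulVec, hK]
  ring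

section LinearOrderedField

variable [Field R] [LinearOrder R] [IsStrictOrderedRing R]

theorem dotProduct_self_nonneg (x : n → R) : 0 ≤ x ⬝ᵥ x :=
  Finset.sum_nonneg fun i _ => mul_self_nonneg (x i)

theorem dotProduct_sq_le_mul (x y : n → R) : (x ⬝ᵥ y) ^ 2 ≤ (x ⬝ᵥ x) * (y ⬝ᵥ y) := by
  simpa only [dotProduct, sq] using Finset.sum_mul_sq_le_sq_mul_sq Finset.univ x y

theorem add_dotProduct_add_self_le (x y : n → R) :
    (x + y) ⬝ᵥ (x + y) ≤ 2 * (x ⬝ᵥ x) + 2 * (y ⬝ᵥ y) := by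
  have h := dotProduct_self_nonneg (x - y)
  simp only [add_dotProduct, dotProduct_add, sub_dotProduct, dotProduct_sub,
    dotProduct_comm y x] at h ⊢
  linarith

theorem transpose_mulVec_dotProduct_self_le {K : Matrix n m R} {C : R} (hC : 0 ≤ C)
    (hK : ∀ v, K *ᵥ v ⬝ᵥ K *ᵥ v ≤ C * (v ⬝ᵥ v)) (b : n → R) :
    Kᵀ *ᵥ b ⬝ᵥ Kᵀ *ᵥ b ≤ C * (b ⬝ᵥ b) := by
  have hu : Kᵀ *ᵥ b ⬝ᵥ Kᵀ *ᵥ b = b ⬝ᵥ K *ᵥ Kᵀ *ᵥ b := by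
    rw [mulVec_transpose, dotProduct_mulVec]
  set u := Kᵀ *ᵥ b
  have hsq : (u ⬝ᵥ u) ^ 2 ≤ C * (b ⬝ᵥ b) * (u ⬝ᵥ u) := calc
    (u ⬝ᵥ u) ^ 2 ≤ (b ⬝ᵥ b) * (K *ᵥ u ⬝ᵥ K *ᵥ u) := hu ▸ dotProduct_sq_le_mul b (K *ᵥ u)
    _ ≤ (b ⬝ᵥ b) * (C * (u ⬝ᵥ u)) := mul_le_mul_of_nonneg_left (hK u) (dotProduct_self_nonneg b)
    _ = C * (b ⬝ᵥ b) * (u ⬝ᵥ u) := by ring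
  nlinarith [dotProduct_self_nonneg u, mul_nonneg hC (dotProduct_self_nonneg b)]

theorem le_dotProduct_fromBlocks_mulVec [DecidableEq n] {A : Matrix m m R} {K : Matrix n m R}
    {μ C c s : R}
    (hA : ∀ v, μ * (v ⬝ᵥ v) ≤ v ⬝ᵥ A *ᵥ v) (hK : ∀ v, K *ᵥ v ⬝ᵥ K *ᵥ v ≤ C * (v ⬝ᵥ v))
    (hC : 0 ≤ C) (hc : 0 ≤ c) (hcμ : 2 * c ≤ μ) (hcs : c * (2 * C + 1) ≤ s) (w : m ⊕ n → R) :
    c * (w ⬝ᵥ w) ≤ w ⬝ᵥ fromBlocks A (-(A * Kᵀ)) (-(K * A)) (K * A * Kᵀ + s • 1) *ᵥ w := by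
  rw [← Sum.elim_comp_inl_inr w, sumElim_dotProduct_fromBlocks_mulVec_sumElim,
    sumElim_dotProduct_sumElim, smul_mulVec, one_mulVec, dotProduct_smul, smul_eq_mul]
  set a := w ∘ Sum.inl
  set b := w ∘ Sum.inr
  set u := Kᵀ *ᵥ b
  have hv := hA (a - u)
  have hu : u ⬝ᵥ u ≤ C * (b ⬝ᵥ b) := transpose_mulVec_dotProduct_self_le hC hK b
  have ha : a ⬝ᵥ a ≤ 2 * ((a - u) ⬝ᵥ (a - u)) + 2 * (u ⬝ᵥ u) := by
    simpa using add_dotProduct_add_self_le (a - u) u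
  nlinarith [dotProduct_self_nonneg (a - u), dotProduct_self_nonneg b,
    mul_le_mul_of_nonneg_left ha hc, mul_le_mul_of_nonneg_left hu hc,
    mul_le_mul_of_nonneg_right hcs (dotProduct_self_nonneg b)]

end LinearOrderedField

end Matrix

theorem stmt_17_general (d k : ℕ) (DK : Matrix (Fin d) (Fin d) ℝ)
    (K : Matrix (Fin k) (Fin d) ℝ) (Kbar μ σ : ℝ) (hμ : 0 < μ)
    (hDKmin : ∀ v : Fin d → ℝ, μ * (v ⬝ᵥ v) ≤ v ⬝ᵥ DK.mulVec v)
    (hKnorm : ∀ v : Fin d → ℝ, (K.mulVec v) ⬝ᵥ (K.mulVec v) ≤ Kbar ^ 2 * (v ⬝ᵥ v)) :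
    ∀ w : (Fin d ⊕ Fin k) → ℝ,
      min (μ / 2) (min (σ ^ 2 / (8 * Kbar ^ 2)) (σ ^ 2 / 2)) * (w ⬝ᵥ w)
        ≤ w ⬝ᵥ (fromBlocks DK (-(DK * Kᵀ)) (-(K * DK))
            (K * DK * Kᵀ + σ ^ 2 • (1 : Matrix (Fin k) (Fin k) ℝ))).mulVec w := by
  set c := min (μ / 2) (min (σ ^ 2 / (8 * Kbar ^ 2)) (σ ^ 2 / 2))
  have hc : 0 ≤ c := le_min (by positivity) (le_min (by positivity) (by positivity))
  have hcμ : c ≤ μ / 2 := min_le_left _ _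
  have hcK : c * (8 * Kbar ^ 2) ≤ σ ^ 2 :=
    mul_le_of_le_div₀ (sq_nonneg σ) (by positivity) ((min_le_right _ _).trans (min_le_left _ _))
  have hcσ : c ≤ σ ^ 2 / 2 := (min_le_right _ _).trans (min_le_right _ _)
  exact le_dotProduct_fromBlocks_mulVec hDKmin hKnorm (sq_nonneg Kbar) hc (by linarith)
    (by linarith)

/-- Lower bound on the minimum singular value of the joint state–action covariance
`D̃ = [[D_K, −D_K Kᵀ], [−K D_K, K D_K Kᵀ + σ²I]]`: if `σ_min(D_K) ≥ μ > 0`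
(expressed via the Rayleigh quotient) and `‖K‖ ≤ K̄` (i.e. `‖Kv‖² ≤ K̄²‖v‖²`), then
`σ_min(D̃) ≥ min{μ/2, σ²/(8K̄²), σ²/2}` (again via the Rayleigh quotient). -/
theorem stmt_17 (d k : ℕ) (DK : Matrix (Fin d) (Fin d) ℝ) (hDK : DK.PosDef)
    (K : Matrix (Fin k) (Fin d) ℝ) (Kbar μ σ : ℝ) (hKbar : 0 < Kbar) (hμ : 0 < μ)
    (hσ : 0 < σ)
    (hDKmin : ∀ v : Fin d → ℝ, μ * (v ⬝ᵥ v) ≤ v ⬝ᵥ DK.mulVec v)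
    (hKnorm : ∀ v : Fin d → ℝ, (K.mulVec v) ⬝ᵥ (K.mulVec v) ≤ Kbar ^ 2 * (v ⬝ᵥ v)) :
    ∀ w : (Fin d ⊕ Fin k) → ℝ,
      min (μ / 2) (min (σ ^ 2 / (8 * Kbar ^ 2)) (σ ^ 2 / 2)) * (w ⬝ᵥ w)
        ≤ w ⬝ᵥ (fromBlocks DK (-(DK * Kᵀ)) (-(K * DK))
            (K * DK * Kᵀ + σ ^ 2 • (1 : Matrix (Fin k) (Fin k) ℝ))).mulVec w :=
  stmt_17_general d k DK K Kbar μ σ hμ hDKmin hKnorm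
end
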